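/- Let 0 ≤ s < r < 1, λ, μ ∈ 𝔻, u₀ = s/r, α ∈ closure(𝔻), and g(z) = T_{u₀}(T_{-r}(z)·T_{λ}(T_{-r}(z)·T_{μ}(α·T_{-r}(z)))). Then g''(r) = (2(r² - s²)/(r³(1 - r²)²))·(−sλ² + r²λ + rμ(1 − |λ|²)). -/

import Mathlib

/-!
Write `u = s/r`, `φ = T_{-r}` and `h w = T_u (w · T_λ (w · T_μ (α w)))`, so that `g = h ∘ φ` with `φ r = 0`.
The second-order chain rule gives `g''(r) = h''(0) φ'(r)² + h'(0) φ''(r)`, where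
`φ'(r) = 1/(1-r²)`, `φ''(r) = 2r/(1-r²)²`, and, by the product and chain rules applied to the
Möbius maps at `0`, `h'(0) = (1-u²)λ` and `h''(0) = 2(1-u²)(-uλ² + (1-|λ|²)μ)`.
-/

/-- The Möbius transformation `T_a(z) = (z+a)/(1 + conj a · z)`. -/
noncomputable def T (a z : ℂ) : ℂ := (z + a) / (1 + (starRingEnd ℂ) a * z)

open Filter Topology ComplexConjugate

section

variable {𝕜 : Type*} [NontriviallyNormedField 𝕜]

def HasSecondDerivAt (f : 𝕜 → 𝕜) (f₁ f₂ x : 𝕜) : Prop :=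
  (∀ᶠ y in 𝓝 x, DifferentiableAt 𝕜 f y) ∧ HasDerivAt f f₁ x ∧ HasDerivAt (deriv f) f₂ x

namespace HasSecondDerivAt

variable {f g : 𝕜 → 𝕜} {a₁ a₂ b₁ b₂ x y : 𝕜}

theorem iteratedDeriv_two_eq (hf : HasSecondDerivAt f a₁ a₂ x) : iteratedDeriv 2 f x = a₂ := by
  rw [iteratedDeriv_succ, iteratedDeriv_one]
  exact hf.2.2.deriv

theorem comp (hf : HasSecondDerivAt f a₁ a₂ y) (hg : HasSecondDerivAt g b₁ b₂ x) (hy : g x = y) :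
    HasSecondDerivAt (fun z => f (g z)) (a₁ * b₁) (a₂ * b₁ ^ 2 + a₁ * b₂) x := by
  obtain ⟨hf_ev, hf₁, hf₂⟩ := hf
  obtain ⟨hg_ev, hg₁, hjet⟩ := hg
  subst hy
  have hf_ev' : ∀ᶠ z in 𝓝 x, DifferentiableAt 𝕜 f (g z) :=
    hg₁.continuousAt.eventually hf_ev
  have hderiv : deriv (fun z => f (g z)) =ᶠ[𝓝 x] fun z => deriv f (g z) * deriv g z := by
    filter_upwards [hf_ev', hg_ev] with z hfz hgz
    exact (hfz.hasDerivAt.comp z hgz.hasDerivAt).deriv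
  refine ⟨?_, hf₁.comp x hg₁, ?_⟩
  · filter_upwards [hf_ev', hg_ev] with z hfz hgz
    exact hfz.comp z hgz
  · refine HasDerivAt.congr_of_eventuallyEq ?_ hderiv
    refine ((hf₂.comp x hg₁).fun_mul hjet).congr_deriv ?_
    rw [Function.comp_apply, hf₁.deriv, hg₁.deriv]
    ring

theorem mul (hf : HasSecondDerivAt f a₁ a₂ x) (hg : HasSecondDerivAt g b₁ b₂ x) :
    HasSecondDerivAt (fun z => f z * g z) (a₁ * g x + f x * b₁)
      (a₂ * g x + 2 * a₁ * b₁ + f x * b₂) x := by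
  obtain ⟨hf_ev, hf₁, hf₂⟩ := hf
  obtain ⟨hg_ev, hg₁, hjet⟩ := hg
  have hderiv : deriv (fun z => f z * g z) =ᶠ[𝓝 x] fun z => deriv f z * g z + f z * deriv g z := by
    filter_upwards [hf_ev, hg_ev] with z hfz hgz
    exact (hfz.hasDerivAt.mul hgz.hasDerivAt).deriv
  refine ⟨?_, hf₁.mul hg₁, ?_⟩
  · filter_upwards [hf_ev, hg_ev] with z hfz hgz
    exact hfz.mul hgz
  · refine HasDerivAt.congr_of_eventuallyEq ?_ hderiv
    refine ((hf₂.fun_mul hg₁).fun_add (hf₁.fun_mul hjet)).congr_deriv ?_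
    rw [hf₁.deriv, hg₁.deriv]
    ring

end HasSecondDerivAt

theorem hasSecondDerivAt_id (x : 𝕜) : HasSecondDerivAt id 1 0 x :=
  ⟨.of_forall fun _ => differentiableAt_id, hasDerivAt_id x, by
    simpa [deriv_id'] using hasDerivAt_const x (1 : 𝕜)⟩

theorem hasSecondDerivAt_const (c x : 𝕜) : HasSecondDerivAt (fun _ => c) 0 0 x :=
  ⟨.of_forall fun _ => differentiableAt_const c, hasDerivAt_const x c, by
    simpa using hasDerivAt_const x (0 : 𝕜)⟩

theorem HasSecondDerivAt.of_eventually_hasDerivAt {f f' : 𝕜 → 𝕜} {f₂ x : 𝕜}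
    (hf : ∀ᶠ y in 𝓝 x, HasDerivAt f (f' y) y) (hf' : HasDerivAt f' f₂ x) :
    HasSecondDerivAt f (f' x) f₂ x :=
  ⟨hf.mono fun _ h => h.differentiableAt, hf.self_of_nhds,
    hf'.congr_of_eventuallyEq (hf.mono fun _ h => h.deriv)⟩

theorem hasDerivAt_moebius {a b x : 𝕜} (hx : 1 + b * x ≠ 0) :
    HasDerivAt (fun z => (z + a) / (1 + b * z)) ((1 - a * b) / (1 + b * x) ^ 2) x := by
  have h := ((hasDerivAt_id x).add_const a).fun_div
    (((hasDerivAt_id x).const_mul b).const_add 1) hx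
  refine h.congr_deriv ?_
  simp only [id]
  ring

theorem hasSecondDerivAt_moebius {a b x : 𝕜} (hx : 1 + b * x ≠ 0) :
    HasSecondDerivAt (fun z => (z + a) / (1 + b * z)) ((1 - a * b) / (1 + b * x) ^ 2)
      (-2 * b * (1 - a * b) / (1 + b * x) ^ 3) x := by
  have hden : HasDerivAt (fun z => 1 + b * z) b x := by
    simpa using ((hasDerivAt_id x).const_mul b).const_add 1
  refine .of_eventually_hasDerivAt (f' := fun y => (1 - a * b) / (1 + b * y) ^ 2) ?_ ?_
  · filter_upwards [hden.continuousAt.eventually_ne hx] with y hy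
    exact hasDerivAt_moebius hy
  · refine ((hasDerivAt_const x (1 - a * b)).fun_div (hden.fun_pow 2)
      (pow_ne_zero 2 hx)).congr_deriv ?_
    field_simp
    ring

end

theorem hasSecondDerivAt_T {a x : ℂ} (hx : 1 + conj a * x ≠ 0) :
    HasSecondDerivAt (T a) ((1 - a * conj a) / (1 + conj a * x) ^ 2)
      (-2 * conj a * (1 - a * conj a) / (1 + conj a * x) ^ 3) x :=
  hasSecondDerivAt_moebius hx

theorem T_zero (a : ℂ) : T a 0 = a := by simp [T]

theorem T_neg_self (a : ℂ) : T (-a) a = 0 := by simp [T]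

theorem hasSecondDerivAt_T_zero (a : ℂ) :
    HasSecondDerivAt (T a) (1 - a * conj a) (-2 * conj a * (1 - a * conj a)) 0 := by
  simpa using hasSecondDerivAt_T (a := a) (x := 0) (by simp)

theorem hasSecondDerivAt_T_nested_zero (u lam mu alpha : ℂ) :
    HasSecondDerivAt (fun w => T u (w * T lam (w * T mu (alpha * w)))) ((1 - u * conj u) * lam)
      (2 * (1 - u * conj u) * (-conj u * lam ^ 2 + (1 - lam * conj lam) * mu)) 0 := by
  have hα := (hasSecondDerivAt_const alpha (0 : ℂ)).mul (hasSecondDerivAt_id 0)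
  have hμ := (hasSecondDerivAt_T_zero mu).comp hα (by simp)
  have hlam := (hasSecondDerivAt_T_zero lam).comp ((hasSecondDerivAt_id 0).mul hμ) (by simp)
  have hu := (hasSecondDerivAt_T_zero u).comp ((hasSecondDerivAt_id 0).mul hlam) (by simp)
  convert hu using 1 <;> simp [T_zero]; ring

theorem hasSecondDerivAt_T_neg_ofReal {r : ℝ} (hr : r ^ 2 ≠ 1) :
    HasSecondDerivAt (T (-(r : ℂ))) (1 / (1 - (r : ℂ) ^ 2)) (2 * r / (1 - (r : ℂ) ^ 2) ^ 2) r := by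
  have hden : 1 + conj (-(r : ℂ)) * r = 1 - (r : ℂ) ^ 2 := by simp [sq, sub_eq_add_neg]
  have hnum : 1 - -(r : ℂ) * conj (-(r : ℂ)) = 1 - (r : ℂ) ^ 2 := by simp [sq]
  have hr' : (1 : ℂ) - (r : ℂ) ^ 2 ≠ 0 := by
    rw [sub_ne_zero, ne_comm]; exact_mod_cast hr
  have h := hasSecondDerivAt_T (hden ▸ hr')
  rw [hden, hnum] at h
  simp only [map_neg, Complex.conj_ofReal] at h
  convert h using 1 <;> field_simp

theorem extremal_second_deriv_general (r s : ℝ) (lam mu alpha : ℂ)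
    (hs : 0 ≤ s) (hsr : s < r) (hr : r < 1)
    (g : ℂ → ℂ)
    (hg : g = fun z =>
      T ((s / r : ℝ) : ℂ)
        (T (-(r : ℂ)) z * T lam (T (-(r : ℂ)) z * T mu (alpha * T (-(r : ℂ)) z)))) :
    iteratedDeriv 2 g (r : ℂ) =
      ((2 * (r ^ 2 - s ^ 2) / (r ^ 3 * (1 - r ^ 2) ^ 2) : ℝ) : ℂ) *
        (-(s : ℂ) * lam ^ 2 + (r : ℂ) ^ 2 * lam +
          (r : ℂ) * mu * ((1 - ‖lam‖ ^ 2 : ℝ) : ℂ)) := by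
  have hr0 : 0 < r := hs.trans_lt hsr
  have hr2 : r ^ 2 ≠ 1 := (pow_lt_one₀ hr0.le hr two_ne_zero).ne
  have hjet := (hasSecondDerivAt_T_nested_zero ((s / r : ℝ) : ℂ) lam mu alpha).comp
    (hasSecondDerivAt_T_neg_ofReal hr2) (T_neg_self _)
  rw [hg, hjet.iteratedDeriv_two_eq, Complex.conj_ofReal, Complex.mul_conj, ← Complex.sq_norm]
  have hr2' : (1 : ℂ) - (r : ℂ) ^ 2 ≠ 0 := by
    rw [sub_ne_zero, ne_comm]; exact_mod_cast hr2
  have hr0' : (r : ℂ) ≠ 0 := by exact_mod_cast hr0.ne'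
  push_cast
  field_simp
  ring

/-- Second-derivative computation for the extremal function of the third order
Dieudonné Lemma. -/
theorem extremal_second_deriv (r s : ℝ) (lam mu alpha : ℂ)
    (hs : 0 ≤ s) (hsr : s < r) (hr : r < 1)
    (hlam : ‖lam‖ < 1) (hmu : ‖mu‖ < 1)
    (halpha : ‖alpha‖ ≤ 1)
    (g : ℂ → ℂ)
    (hg : g = fun z =>
      T ((s / r : ℝ) : ℂ)
        (T (-(r : ℂ)) z * T lam (T (-(r : ℂ)) z * T mu (alpha * T (-(r : ℂ)) z)))) :
    iteratedDeriv 2 g (r : ℂ) =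
      ((2 * (r ^ 2 - s ^ 2) / (r ^ 3 * (1 - r ^ 2) ^ 2) : ℝ) : ℂ) *
        (-(s : ℂ) * lam ^ 2 + (r : ℂ) ^ 2 * lam +
          (r : ℂ) * mu * ((1 - ‖lam‖ ^ 2 : ℝ) : ℂ)) :=
  extremal_second_deriv_general r s lam mu alpha hs hsr hr g hg
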